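/- (Generation of the stabilizer of ∞ in the Eisenstein–Picard modular group.) Let G ∈ U(3,1) be a 4×4 matrix all of whose entries lie in Z[ω], with G₄₁ = 0 and G₁₁ = 1. Then G lies in the subgroup of GL(4,ℂ) generated by the three matrices N₁, M_{U₁}, M_{U₂}. -/

import Mathlib

open Matrix Complex

/-- ω = (−1 + i√3)/2, a primitive cube root of unity. -/
noncomputable def ω : ℂ := (-1 + Complex.I * Real.sqrt 3) / 2

/-- The Eisenstein integers Z[ω], as a subset of ℂ. -/
def Zω : Set ℂ := {z : ℂ | ∃ a b : ℤ, z = (a : ℂ) + (b : ℂ) * ω}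

/-- The Hermitian form matrix J. -/
def Jm : Matrix (Fin 4) (Fin 4) ℂ := !![0,0,0,1; 0,1,0,0; 0,0,1,0; 1,0,0,0]

/-- Heisenberg translation N_(τ,t). -/
noncomputable def N (τ₁ τ₂ : ℂ) (t : ℝ) : Matrix (Fin 4) (Fin 4) ℂ :=
  !![1, -(starRingEnd ℂ) τ₁, -(starRingEnd ℂ) τ₂,
       (-((Complex.normSq τ₁ : ℂ) + (Complex.normSq τ₂ : ℂ)) + Complex.I * (t : ℝ)) / 2;
     0, 1, 0, τ₁;
     0, 0, 1, τ₂;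
     0, 0, 0, 1]

/-- Heisenberg rotation M_U = diag(1, U, 1). -/
def M (U : Matrix (Fin 2) (Fin 2) ℂ) : Matrix (Fin 4) (Fin 4) ℂ :=
  !![1, 0, 0, 0;
     0, U 0 0, U 0 1, 0;
     0, U 1 0, U 1 1, 0;
     0, 0, 0, 1]

/-- Heisenberg dilation A_r = diag(r, 1, 1, 1/r). -/
noncomputable def Ad (r : ℝ) : Matrix (Fin 4) (Fin 4) ℂ :=
  !![(r : ℂ), 0, 0, 0; 0, 1, 0, 0; 0, 0, 1, 0; 0, 0, 0, (r : ℂ)⁻¹]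

noncomputable def U₁ : Matrix (Fin 2) (Fin 2) ℂ := !![0, 1; 1, 0]
noncomputable def U₂ : Matrix (Fin 2) (Fin 2) ℂ := !![-ω, 0; 0, 1]

/-- The Heisenberg translation N₁ = N_((1,0)ᵀ, √3). -/
noncomputable def N₁ : Matrix (Fin 4) (Fin 4) ℂ := N 1 0 (Real.sqrt 3)

/-- The involution R. -/
def Rmat : Matrix (Fin 4) (Fin 4) ℂ := !![0,0,0,1; 0,-1,0,0; 0,0,-1,0; 1,0,0,0]

/-- The generators {N₁, M_{U₁}, M_{U₂}} of the stabilizer of ∞, as a subset of GL(4,ℂ). -/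
noncomputable def gens3 : Set (GL (Fin 4) ℂ) :=
  {g | (g : Matrix (Fin 4) (Fin 4) ℂ) = N₁ ∨ (g : Matrix (Fin 4) (Fin 4) ℂ) = M U₁ ∨
       (g : Matrix (Fin 4) (Fin 4) ℂ) = M U₂}

/-- The generators {U₁, U₂}, as a subset of GL(2,ℂ). -/
noncomputable def gens2 : Set (GL (Fin 2) ℂ) :=
  {g | (g : Matrix (Fin 2) (Fin 2) ℂ) = U₁ ∨ (g : Matrix (Fin 2) (Fin 2) ℂ) = U₂}

/-- The generators {N₁, M_{U₁}, M_{U₂}, R}, as a subset of GL(4,ℂ). -/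
noncomputable def gens4 : Set (GL (Fin 4) ℂ) :=
  {g | (g : Matrix (Fin 4) (Fin 4) ℂ) = N₁ ∨ (g : Matrix (Fin 4) (Fin 4) ℂ) = M U₁ ∨
       (g : Matrix (Fin 4) (Fin 4) ℂ) = M U₂ ∨ (g : Matrix (Fin 4) (Fin 4) ℂ) = Rmat}

/-! An element G of U(3,1) fixing ∞ with G₁₁ = 1 is block upper triangular, so it factors as a
Heisenberg translation N_(τ,t) followed by a rotation M_A with A unitary. A unit vector of Z[ω]²
has a single nonzero coordinate, which is a unit, i.e. a power of -ω; hence A is monomial and a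
word in U₁ and U₂. For the translation, Eisenstein entries force t = b√3 with
b ≡ |τ₁|² + |τ₂|² (mod 2). Conjugating N₁ by the rotations gives the horizontal generators
N_((1,0),√3), N_((ω,0),√3) and their swaps, whose commutator is the vertical translation
N_((0,0),2√3); together they reach every such (τ, t). -/

open ComplexConjugate

lemma ω_mul_ω_add_ω_add_one : ω * ω + ω + 1 = 0 := by
  have h3 : ((Real.sqrt 3 : ℝ) : ℂ) ^ 2 = 3 := by
    norm_cast; exact Real.sq_sqrt (by norm_num)
  unfold ω
  linear_combination (I ^ 2 / 4) * h3 + (3 / 4 : ℂ) * I_sq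

lemma ω_re : ω.re = -(1 / 2) := by norm_num [ω]

lemma ω_im : ω.im = Real.sqrt 3 / 2 := by simp [ω]

lemma normSq_ω : normSq ω = 1 := by
  rw [normSq_apply, ω_re, ω_im]
  nlinarith [Real.mul_self_sqrt (show (0 : ℝ) ≤ 3 by norm_num)]

lemma ω_mem_Zω : ω ∈ Zω := ⟨0, 1, by simp⟩

lemma normSq_intCast_add_intCast_mul_ω (m n : ℤ) :
    normSq (m + n * ω) = ((m * m - m * n + n * n : ℤ) : ℝ) := by
  simp only [normSq_apply, add_re, add_im, mul_re, mul_im, intCast_re, intCast_im, ω_re, ω_im]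
  push_cast
  nlinarith [Real.mul_self_sqrt (show (0 : ℝ) ≤ 3 by norm_num)]

lemma eq_neg_ω_pow_of_normSq_eq_one {u : ℂ} (hu : u ∈ Zω) (h : normSq u = 1) :
    ∃ k : ℕ, u = (-ω) ^ k := by
  obtain ⟨m, n, rfl⟩ := hu
  have hmn : m * m - m * n + n * n = 1 := by
    rw [normSq_intCast_add_intCast_mul_ω] at h; exact_mod_cast h
  have hm : m ^ 2 ≤ 1 := by nlinarith [sq_nonneg (2 * n - m)]
  have hn : n ^ 2 ≤ 1 := by nlinarith [sq_nonneg (2 * m - n)]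
  have hω := ω_mul_ω_add_ω_add_one
  obtain ⟨hm₁, hm₂⟩ : -1 ≤ m ∧ m ≤ 1 := abs_le.mp (sq_le_one_iff_abs_le_one m |>.mp hm)
  obtain ⟨hn₁, hn₂⟩ : -1 ≤ n ∧ n ≤ 1 := abs_le.mp (sq_le_one_iff_abs_le_one n |>.mp hn)
  interval_cases m <;> interval_cases n <;> simp at hmn
  · exact ⟨2, by push_cast; linear_combination -hω⟩
  · exact ⟨3, by push_cast; linear_combination (ω - 1) * hω⟩
  · exact ⟨1, by push_cast; ring⟩
  · exact ⟨4, by push_cast; linear_combination (ω - ω * ω) * hω⟩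
  · exact ⟨0, by push_cast; ring⟩
  · exact ⟨5, by push_cast; linear_combination (ω * ω * ω - ω * ω + 1) * hω⟩

lemma normSq_add_normSq_eq_one_cases_of_mem_Zω {x y : ℂ} (hx : x ∈ Zω) (hy : y ∈ Zω)
    (h : normSq x + normSq y = 1) :
    (x = 0 ∧ normSq y = 1) ∨ (normSq x = 1 ∧ y = 0) := by
  obtain ⟨m, n, rfl⟩ := hx
  obtain ⟨p, q, rfl⟩ := hy
  simp only [← normSq_eq_zero, normSq_intCast_add_intCast_mul_ω] at h ⊢
  have h' : (m * m - m * n + n * n) + (p * p - p * q + q * q) = 1 := by exact_mod_cast h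
  have : 0 ≤ m * m - m * n + n * n := by nlinarith [sq_nonneg (m - n)]
  have : 0 ≤ p * p - p * q + q * q := by nlinarith [sq_nonneg (p - q)]
  have : (m * m - m * n + n * n = 0 ∧ p * p - p * q + q * q = 1) ∨
      (m * m - m * n + n * n = 1 ∧ p * p - p * q + q * q = 0) := by omega
  exact_mod_cast this

lemma N_mul_N (τ₁ τ₂ σ₁ σ₂ : ℂ) (t s : ℝ) :
    N τ₁ τ₂ t * N σ₁ σ₂ s =
      N (τ₁ + σ₁) (τ₂ + σ₂) (t + s - 2 * (conj τ₁ * σ₁ + conj τ₂ * σ₂).im) := by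
  ext i j
  fin_cases i <;> fin_cases j <;> simp [N, mul_apply, Fin.sum_univ_four]
  all_goals apply Complex.ext <;> simp [normSq_apply] <;> ring

lemma N_zero_zero_zero : N 0 0 0 = 1 := by
  ext i j
  fin_cases i <;> fin_cases j <;> simp [N, one_apply]

lemma N_mul_N_neg (τ₁ τ₂ : ℂ) (t : ℝ) : N τ₁ τ₂ t * N (-τ₁) (-τ₂) (-t) = 1 := by
  rw [N_mul_N, ← N_zero_zero_zero]
  congr 1 <;> simp [mul_comm (conj _), mul_conj]

lemma M_mul_M (U V : Matrix (Fin 2) (Fin 2) ℂ) : M U * M V = M (U * V) := by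
  ext i j
  fin_cases i <;> fin_cases j <;> simp [M, mul_apply, Fin.sum_univ_four, Fin.sum_univ_two]

lemma M_one : M 1 = 1 := by
  ext i j
  fin_cases i <;> fin_cases j <;> simp [M, one_apply]

def rotationHom : Matrix (Fin 2) (Fin 2) ℂ →* Matrix (Fin 4) (Fin 4) ℂ where
  toFun := M
  map_one' := M_one
  map_mul' U V := (M_mul_M U V).symm

lemma mul_M_apply_three (X : Matrix (Fin 4) (Fin 4) ℂ) (U : Matrix (Fin 2) (Fin 2) ℂ) (i : Fin 4) :
    (X * M U) i 3 = X i 3 := by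
  simp [M, mul_apply, Fin.sum_univ_four]

lemma normSq_add_normSq_of_mem_unitaryGroup {U : Matrix (Fin 2) (Fin 2) ℂ}
    (hU : U ∈ unitaryGroup (Fin 2) ℂ) (τ₁ τ₂ : ℂ) :
    normSq (U 0 0 * τ₁ + U 0 1 * τ₂) + normSq (U 1 0 * τ₁ + U 1 1 * τ₂) =
      normSq τ₁ + normSq τ₂ := by
  have hU' := congrFun₂ (mem_unitaryGroup_iff'.mp hU)
  simp only [mul_apply, Fin.sum_univ_two, star_apply, RCLike.star_def, one_apply] at hU'
  have h00 : conj (U 0 0) * U 0 0 + conj (U 1 0) * U 1 0 = 1 := by simpa using hU' 0 0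
  have h01 : conj (U 0 0) * U 0 1 + conj (U 1 0) * U 1 1 = 0 := by simpa using hU' 0 1
  have h10 : conj (U 0 1) * U 0 0 + conj (U 1 1) * U 1 0 = 0 := by simpa using hU' 1 0
  have h11 : conj (U 0 1) * U 0 1 + conj (U 1 1) * U 1 1 = 1 := by simpa using hU' 1 1
  apply Complex.ofReal_injective
  push_cast
  simp only [← mul_conj, map_add, map_mul]
  linear_combination (τ₁ * conj τ₁) * h00 + (τ₂ * conj τ₁) * h01 + (τ₁ * conj τ₂) * h10 +
    (τ₂ * conj τ₂) * h11

lemma M_mul_N_mul_M_star {U : Matrix (Fin 2) (Fin 2) ℂ} (hU : U ∈ unitaryGroup (Fin 2) ℂ)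
    (τ₁ τ₂ : ℂ) (t : ℝ) :
    M U * N τ₁ τ₂ t * M (star U) = N (U 0 0 * τ₁ + U 0 1 * τ₂) (U 1 0 * τ₁ + U 1 1 * τ₂) t := by
  have hnorm := congrArg ((↑) : ℝ → ℂ) (normSq_add_normSq_of_mem_unitaryGroup hU τ₁ τ₂)
  have hU' := congrFun₂ (mem_unitaryGroup_iff.mp hU)
  simp only [mul_apply, Fin.sum_univ_two, star_apply, RCLike.star_def, one_apply] at hU'
  ext i j
  fin_cases i <;> fin_cases j <;> simp [M, N, mul_apply, Fin.sum_univ_four]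
  · ring
  · ring
  · push_cast at hnorm
    linear_combination hnorm
  · simpa using hU' 0 0
  · simpa using hU' 0 1
  · simpa using hU' 1 0
  · simpa using hU' 1 1

def gens3Closure : Submonoid (Matrix (Fin 4) (Fin 4) ℂ) :=
  (Subgroup.closure gens3).toSubmonoid.map (Units.coeHom _)

lemma mem_gens3Closure_of_mem_gens3 {X Y : Matrix (Fin 4) (Fin 4) ℂ} (hXY : X * Y = 1)
    (hX : X = N₁ ∨ X = M U₁ ∨ X = M U₂) : X ∈ gens3Closure :=
  ⟨⟨X, Y, hXY, mul_eq_one_comm.mp hXY⟩, Subgroup.subset_closure hX, rfl⟩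

lemma mem_gens3Closure_of_mul_eq_one {X Y : Matrix (Fin 4) (Fin 4) ℂ} (hX : X ∈ gens3Closure)
    (hXY : X * Y = 1) : Y ∈ gens3Closure := by
  obtain ⟨g, hg, rfl⟩ := hX
  exact ⟨g⁻¹, Subgroup.inv_mem _ hg, Units.inv_eq_of_mul_eq_one_right hXY⟩

lemma M_star_mem {U : Matrix (Fin 2) (Fin 2) ℂ} (hU : U ∈ unitaryGroup (Fin 2) ℂ)
    (hMU : M U ∈ gens3Closure) : M (star U) ∈ gens3Closure :=
  mem_gens3Closure_of_mul_eq_one hMU (by rw [M_mul_M, mem_unitaryGroup_iff.mp hU, M_one])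

lemma U₁_mem_unitaryGroup : U₁ ∈ unitaryGroup (Fin 2) ℂ := by
  rw [mem_unitaryGroup_iff]
  ext i j
  fin_cases i <;> fin_cases j <;> simp [U₁, mul_apply]

lemma U₂_eq_diagonal : U₂ = diagonal ![-ω, 1] := by
  ext i j
  fin_cases i <;> fin_cases j <;> simp [U₂]

lemma diagonal_mem_unitaryGroup_of_normSq_eq_one {u v : ℂ} (hu : normSq u = 1)
    (hv : normSq v = 1) : diagonal ![u, v] ∈ unitaryGroup (Fin 2) ℂ := by
  rw [mem_unitaryGroup_iff, star_eq_conjTranspose, diagonal_conjTranspose, diagonal_mul_diagonal,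
    ← diagonal_one]
  congr 1
  ext i
  fin_cases i <;> simp [mul_conj, hu, hv]

lemma M_U₁_mem : M U₁ ∈ gens3Closure :=
  mem_gens3Closure_of_mem_gens3
    (by rw [M_mul_M, mem_unitaryGroup_iff.mp U₁_mem_unitaryGroup, M_one])
    (Or.inr (Or.inl rfl))

lemma M_U₂_mem : M U₂ ∈ gens3Closure := by
  have hU₂ : U₂ ∈ unitaryGroup (Fin 2) ℂ := by
    rw [U₂_eq_diagonal]
    exact diagonal_mem_unitaryGroup_of_normSq_eq_one (by simp [normSq_ω]) (by simp)
  exact mem_gens3Closure_of_mem_gens3 (by rw [M_mul_M, mem_unitaryGroup_iff.mp hU₂, M_one])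
    (Or.inr (Or.inr rfl))

lemma N₁_mem : N₁ ∈ gens3Closure :=
  mem_gens3Closure_of_mem_gens3 (N_mul_N_neg 1 0 _) (Or.inl rfl)

lemma M_diagonal_one_mem {u : ℂ} (hu : u ∈ Zω) (h : normSq u = 1) :
    M (diagonal ![u, 1]) ∈ gens3Closure := by
  obtain ⟨k, rfl⟩ := eq_neg_ω_pow_of_normSq_eq_one hu h
  have hpow : diagonal ![(-ω) ^ k, 1] = U₂ ^ k := by
    rw [U₂_eq_diagonal, diagonal_pow]
    congr 1
    ext i
    fin_cases i <;> simp
  rw [hpow]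
  change rotationHom (U₂ ^ k) ∈ _
  rw [map_pow]
  exact pow_mem M_U₂_mem k

lemma M_diagonal_mem {u v : ℂ} (hu : u ∈ Zω) (hv : v ∈ Zω) (hu₁ : normSq u = 1)
    (hv₁ : normSq v = 1) : M (diagonal ![u, v]) ∈ gens3Closure := by
  have hsplit : diagonal ![u, v] = diagonal ![u, 1] * (U₁ * diagonal ![v, 1] * U₁) := by
    ext i j
    fin_cases i <;> fin_cases j <;> simp [U₁, diagonal, vecHead, vecTail, mul_apply]
  rw [hsplit, ← M_mul_M, ← M_mul_M, ← M_mul_M]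
  exact mul_mem (M_diagonal_one_mem hu hu₁)
    (mul_mem (mul_mem M_U₁_mem (M_diagonal_one_mem hv hv₁)) M_U₁_mem)

lemma M_mem_of_mem_unitaryGroup {A : Matrix (Fin 2) (Fin 2) ℂ} (hA : A ∈ unitaryGroup (Fin 2) ℂ)
    (hent : ∀ i j, A i j ∈ Zω) : M A ∈ gens3Closure := by
  have hA' := congrFun₂ (mem_unitaryGroup_iff'.mp hA)
  simp only [mul_apply, Fin.sum_univ_two, star_apply, RCLike.star_def, one_apply] at hA'
  have hcol (j : Fin 2) : normSq (A 0 j) + normSq (A 1 j) = 1 := by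
    have h := hA' j j
    simp only [mul_comm (conj _), mul_conj, if_pos] at h
    exact_mod_cast h
  have horth : conj (A 0 0) * A 0 1 + conj (A 1 0) * A 1 1 = 0 := by simpa using hA' 0 1
  rcases normSq_add_normSq_eq_one_cases_of_mem_Zω (hent 0 0) (hent 1 0) (hcol 0) with
    ⟨h00, h10⟩ | ⟨h00, h10⟩
  · have h11 : A 1 1 = 0 := by
      rw [h00, map_zero, zero_mul, zero_add] at horth
      exact (mul_eq_zero.mp horth).resolve_left (by simp [← normSq_eq_zero, h10])
    have h01 : normSq (A 0 1) = 1 := by simpa [h11] using hcol 1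
    have hA : A = U₁ * diagonal ![A 1 0, A 0 1] := by
      ext i j
      fin_cases i <;> fin_cases j <;> simp [U₁, mul_apply, h00, h11]
    rw [hA, ← M_mul_M]
    exact mul_mem M_U₁_mem (M_diagonal_mem (hent 1 0) (hent 0 1) h10 h01)
  · have h01 : A 0 1 = 0 := by
      rw [h10, map_zero, zero_mul, add_zero] at horth
      exact (mul_eq_zero.mp horth).resolve_left (by simp [← normSq_eq_zero, h00])
    have h11 : normSq (A 1 1) = 1 := by simpa [h01] using hcol 1
    have hA : A = diagonal ![A 0 0, A 1 1] := by
      ext i j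
      fin_cases i <;> fin_cases j <;> simp [h01, h10]
    rw [hA]
    exact M_diagonal_mem (hent 0 0) (hent 1 1) h00 h11

lemma N_real_mul_mul_N_real_mul (a b : ℝ) (τ₁ τ₂ : ℂ) (t : ℝ) :
    N (a * τ₁) (a * τ₂) (a * t) * N (b * τ₁) (b * τ₂) (b * t) =
      N ((a + b : ℝ) * τ₁) ((a + b : ℝ) * τ₂) ((a + b) * t) := by
  rw [N_mul_N]
  congr 1
  · push_cast; ring
  · push_cast; ring
  · simp [mul_im, conj_re, conj_im]; ring

lemma N_intCast_mul_mem {τ₁ τ₂ : ℂ} {t : ℝ} (h : N τ₁ τ₂ t ∈ gens3Closure) (k : ℤ) :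
    N ((k : ℝ) * τ₁) ((k : ℝ) * τ₂) (k * t) ∈ gens3Closure := by
  have hpos : N ((1 : ℝ) * τ₁) ((1 : ℝ) * τ₂) (1 * t) ∈ gens3Closure := by simpa using h
  have hneg : N ((-1 : ℝ) * τ₁) ((-1 : ℝ) * τ₂) (-1 * t) ∈ gens3Closure :=
    mem_gens3Closure_of_mul_eq_one h (by simpa using N_mul_N_neg τ₁ τ₂ t)
  induction k using Int.induction_on with
  | zero => simp [N_zero_zero_zero, one_mem]
  | succ k ih =>
    have := mul_mem ih hpos
    rw [N_real_mul_mul_N_real_mul] at this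
    exact_mod_cast this
  | pred k ih =>
    have := mul_mem ih hneg
    rw [N_real_mul_mul_N_real_mul] at this
    push_cast at this ⊢
    convert this using 2 <;> ring

lemma N_swap_mem {τ₁ τ₂ : ℂ} {t : ℝ} (h : N τ₁ τ₂ t ∈ gens3Closure) :
    N τ₂ τ₁ t ∈ gens3Closure := by
  have := mul_mem (mul_mem M_U₁_mem h) (M_star_mem U₁_mem_unitaryGroup M_U₁_mem)
  rw [M_mul_N_mul_M_star U₁_mem_unitaryGroup] at this
  simpa [U₁] using this

lemma N_ω_mem : N ω 0 (Real.sqrt 3) ∈ gens3Closure := by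
  have hU := diagonal_mem_unitaryGroup_of_normSq_eq_one normSq_ω normSq_one
  have hM := M_diagonal_one_mem ω_mem_Zω normSq_ω
  have := mul_mem (mul_mem hM N₁_mem) (M_star_mem hU hM)
  rw [N₁, M_mul_N_mul_M_star hU] at this
  simpa using this

lemma N_horizontal_mem (m n : ℤ) :
    N (m + n * ω) 0 ((m + n - m * n : ℤ) * Real.sqrt 3) ∈ gens3Closure := by
  have := mul_mem (N_intCast_mul_mem N₁_mem m) (N_intCast_mul_mem N_ω_mem n)
  rw [N_mul_N] at this
  convert this using 2
  · simp
  · simp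
  · simp [mul_im, ω_im, ω_re]
    ring

lemma N_vertical_mem : N 0 0 (2 * Real.sqrt 3) ∈ gens3Closure := by
  have hinv : N (-(1 + ω)) 0 (-Real.sqrt 3) ∈ gens3Closure :=
    mem_gens3Closure_of_mul_eq_one (N_horizontal_mem 1 1)
      (by convert N_mul_N_neg _ _ _ using 2; simp)
  have := mul_mem (mul_mem N_ω_mem N₁_mem) hinv
  rw [N₁, N_mul_N, N_mul_N] at this
  convert this using 2
  · ring
  · ring
  · simp [mul_im, ω_im, ω_re]
    ring

lemma N_mem_of_parity (m n p q b : ℤ) (hb : 2 ∣ b - (m + n - m * n) - (p + q - p * q)) :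
    N (m + n * ω) (p + q * ω) (b * Real.sqrt 3) ∈ gens3Closure := by
  obtain ⟨j, hj⟩ := hb
  have := mul_mem (mul_mem (N_horizontal_mem m n) (N_swap_mem (N_horizontal_mem p q)))
    (N_intCast_mul_mem N_vertical_mem j)
  rw [N_mul_N, N_mul_N] at this
  convert this using 2
  · simp
  · simp
  · have hb : (b : ℝ) = (m + n - m * n) + (p + q - p * q) + 2 * j := by
      exact_mod_cast (by linarith : b = (m + n - m * n) + (p + q - p * q) + 2 * j)
    simp [hb]
    ring

lemma N_mem_of_mem_Zω {τ₁ τ₂ : ℂ} {t : ℝ} (h : ∀ i, N τ₁ τ₂ t i 3 ∈ Zω) :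
    N τ₁ τ₂ t ∈ gens3Closure := by
  obtain ⟨m, n, hτ₁⟩ : τ₁ ∈ Zω := by simpa [N] using h 1
  obtain ⟨p, q, hτ₂⟩ : τ₂ ∈ Zω := by simpa [N] using h 2
  obtain ⟨a, b, hc⟩ := h 0
  have hre : (-(q * q) + (p * q - p * p) + (-(n * n) + (m * n - m * m))) / 2 =
      (a + b * -(1 / 2) : ℝ) := by
    simpa [N, hτ₁, hτ₂, normSq_intCast_add_intCast_mul_ω, ω_re] using congrArg re hc
  have him : t / 2 = b * (Real.sqrt 3 / 2) := by simpa [N, ω_im] using congrArg im hc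
  have ht : t = b * Real.sqrt 3 := by linarith
  have hab : 2 * a - b + (m * m - m * n + n * n) + (p * p - p * q + q * q) = 0 := by
    have : (2 * a - b + (m * m - m * n + n * n) + (p * p - p * q + q * q) : ℝ) = 0 := by linarith
    exact_mod_cast this
  have hsq (x : ℤ) : 2 ∣ x * x - x := by simpa [mul_sub] using (Int.even_mul_pred_self x).two_dvd
  rw [hτ₁, hτ₂, ht]
  apply N_mem_of_parity
  have := hsq m
  have := hsq n
  have := hsq p
  have := hsq q
  omega

lemma conjTranspose_mul_Jm_mul_apply (G : Matrix (Fin 4) (Fin 4) ℂ) (i j : Fin 4) :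
    (Gᴴ * Jm * G) i j =
      conj (G 3 i) * G 0 j + conj (G 1 i) * G 1 j + conj (G 2 i) * G 2 j +
        conj (G 0 i) * G 3 j := by
  simp [mul_apply, Jm, Fin.sum_univ_four]

lemma apply_zero_and_apply_three_of_mem_U31 {G : Matrix (Fin 4) (Fin 4) ℂ} (hG : Gᴴ * Jm * G = Jm)
    (h30 : G 3 0 = 0) (h00 : G 0 0 = 1) :
    G 1 0 = 0 ∧ G 2 0 = 0 ∧ G 3 1 = 0 ∧ G 3 2 = 0 ∧ G 3 3 = 1 := by
  have E (i j : Fin 4) := (conjTranspose_mul_Jm_mul_apply G i j).symm.trans (congrFun₂ hG i j)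
  have hcol : normSq (G 1 0) + normSq (G 2 0) = 0 := by
    exact_mod_cast (by simpa [h30, h00, mul_comm (conj _), mul_conj, Jm] using E 0 0 :
      (normSq (G 1 0) : ℂ) + normSq (G 2 0) = 0)
  have hG10 : G 1 0 = 0 := by
    rw [← normSq_eq_zero]; linarith [normSq_nonneg (G 1 0), normSq_nonneg (G 2 0)]
  have hG20 : G 2 0 = 0 := by
    rw [← normSq_eq_zero]; linarith [normSq_nonneg (G 1 0), normSq_nonneg (G 2 0)]
  have hrow (j : Fin 4) : conj (G 3 j) = Jm j 0 := by simpa [h30, h00, hG10, hG20] using E j 0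
  refine ⟨hG10, hG20, ?_, ?_, ?_⟩
  · simpa [Jm] using hrow 1
  · simpa [Jm] using hrow 2
  · simpa [Jm] using congrArg conj (hrow 3)

lemma block_mem_unitaryGroup_of_mem_U31 {G : Matrix (Fin 4) (Fin 4) ℂ} (hG : Gᴴ * Jm * G = Jm)
    (h30 : G 3 0 = 0) (h00 : G 0 0 = 1) :
    !![G 1 1, G 1 2; G 2 1, G 2 2] ∈ unitaryGroup (Fin 2) ℂ := by
  obtain ⟨-, -, h31, h32, -⟩ := apply_zero_and_apply_three_of_mem_U31 hG h30 h00
  have E (i j : Fin 4) := (conjTranspose_mul_Jm_mul_apply G i j).symm.trans (congrFun₂ hG i j)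
  rw [mem_unitaryGroup_iff']
  ext i j
  fin_cases i <;> fin_cases j
  · simpa [mul_apply, Fin.sum_univ_two, h31, h32, Jm] using E 1 1
  · simpa [mul_apply, Fin.sum_univ_two, h31, h32, Jm] using E 1 2
  · simpa [mul_apply, Fin.sum_univ_two, h31, h32, Jm] using E 2 1
  · simpa [mul_apply, Fin.sum_univ_two, h31, h32, Jm] using E 2 2

lemma eq_N_mul_M_of_mem_U31 {G : Matrix (Fin 4) (Fin 4) ℂ} (hG : Gᴴ * Jm * G = Jm)
    (h30 : G 3 0 = 0) (h00 : G 0 0 = 1) :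
    G = N (G 1 3) (G 2 3) (2 * (G 0 3).im) * M !![G 1 1, G 1 2; G 2 1, G 2 2] := by
  obtain ⟨h10, h20, h31, h32, h33⟩ := apply_zero_and_apply_three_of_mem_U31 hG h30 h00
  have E (i j : Fin 4) := (conjTranspose_mul_Jm_mul_apply G i j).symm.trans (congrFun₂ hG i j)
  have h01 : G 1 1 * conj (G 1 3) + G 2 1 * conj (G 2 3) + G 0 1 = 0 := by
    simpa [h31, h33, Jm] using congrArg conj (E 1 3)
  have h02 : G 1 2 * conj (G 1 3) + G 2 2 * conj (G 2 3) + G 0 2 = 0 := by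
    simpa [h32, h33, Jm] using congrArg conj (E 2 3)
  have h03 : (G 0 3).re + normSq (G 1 3) + normSq (G 2 3) + (G 0 3).re = 0 := by
    simpa [h33, Jm, normSq_apply] using congrArg re (E 3 3)
  ext i j
  fin_cases i <;> fin_cases j <;>
    simp [N, M, mul_apply, Fin.sum_univ_four, h00, h10, h20, h30, h31, h32, h33]
  · linear_combination h01
  · linear_combination h02
  · apply Complex.ext
    · simp
      linarith
    · simp

/-- Generation of the stabilizer of ∞ in the Eisenstein–Picard modular group: any G ∈ U(3,1)
with Eisenstein integer entries, G₄₁ = 0 and G₁₁ = 1 lies in the subgroup of GL(4,ℂ)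
generated by N₁, M_{U₁}, M_{U₂}. -/
theorem stmt7 (G : Matrix (Fin 4) (Fin 4) ℂ) (hG : Gᴴ * Jm * G = Jm)
    (hent : ∀ i j, G i j ∈ Zω) (h41 : G 3 0 = 0) (h11 : G 0 0 = 1) :
    ∃ g ∈ Subgroup.closure gens3, (g : Matrix (Fin 4) (Fin 4) ℂ) = G := by
  set A : Matrix (Fin 2) (Fin 2) ℂ := !![G 1 1, G 1 2; G 2 1, G 2 2]
  have hdecomp : G = N (G 1 3) (G 2 3) (2 * (G 0 3).im) * M A :=
    eq_N_mul_M_of_mem_U31 hG h41 h11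
  have hN : N (G 1 3) (G 2 3) (2 * (G 0 3).im) ∈ gens3Closure :=
    N_mem_of_mem_Zω fun i => by
      have h := hent i 3
      rwa [hdecomp, mul_M_apply_three] at h
  have hM : M A ∈ gens3Closure :=
    M_mem_of_mem_unitaryGroup (block_mem_unitaryGroup_of_mem_U31 hG h41 h11)
      fun i j => by fin_cases i <;> fin_cases j <;> exact hent _ _
  obtain ⟨g, hg, hgG⟩ := mul_mem hN hM
  exact ⟨g, hg, hgG.trans hdecomp.symm⟩
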